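/- arXiv:2311.06044 — 4 statements merged into one kernel-verified Lean document; each statement's English description precedes it below -/
import Mathlib

section
/- Let w be a valuation on a field K and let c ∈ K satisfy w(c) = 0, w(1 + 4c) = 0, and such that the quadratic form (x,y) ↦ x² − xy − c̄y² over the residue field Kw is anisotropic. Then for all f ∈ K and g ∈ K×: w(g) ≤ max{w(f), 0} if and only if f²/((1 − f − cf²)·g²) ∈ O_w. -/
/-! The form `x² − xy − cy²` is the norm form `N(x − αy)` of a root `α` of `T² − T − c`.
Anisotropy of its reduction makes it behave like a norm for `w`:
`w(x² − xy − cy²) = max(w x, w y)²`, since after scaling so that `x, y ∈ O_w` with one of them a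
unit, the value can only drop below `1` if the residues form a nontrivial zero. With `x = 1` and
`y = f` this gives `w(1 − f − cf²) = max(w f, 1)²`, and the equivalence becomes
`w f ≤ max(w f, 1) · w g ↔ min(w f, 1) ≤ w g`. -/

def normForm {R : Type*} [CommRing R] (c x y : R) : R := x ^ 2 - x * y - c * y ^ 2

def NormFormAnisotropic {R : Type*} [CommRing R] (c : R) : Prop :=
  ∀ x y : R, normForm c x y = 0 → x = 0 ∧ y = 0

section normForm

variable {R S : Type*} [CommRing R] [CommRing S]

theorem normForm_mul_mul (c m x y : R) :
    normForm c (m * x) (m * y) = m ^ 2 * normForm c x y := by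
  unfold normForm; ring

theorem map_normForm {F : Type*} [FunLike F R S] [RingHomClass F R S] (φ : F) (c x y : R) :
    φ (normForm c x y) = normForm (φ c) (φ x) (φ y) := by
  simp only [normForm, map_sub, map_mul, map_pow]

end normForm

theorem le_max_one_mul_iff {Γ₀ : Type*} [LinearOrderedCommGroupWithZero Γ₀] (a b : Γ₀) :
    a ≤ max a 1 * b ↔ min a 1 ≤ b := by
  rcases le_or_gt a 1 with ha | ha
  · rw [max_eq_right ha, min_eq_left ha, one_mul]
  · rw [max_eq_left ha.le, min_eq_right ha.le]
    exact le_mul_iff_one_le_right (zero_lt_one.trans ha)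

namespace Valuation

variable {K Γ₀ : Type*} [Field K] [LinearOrderedCommGroupWithZero Γ₀] {w : Valuation K Γ₀}

theorem residue_eq_zero_iff (a : w.valuationSubring) :
    IsLocalRing.residue w.valuationSubring a = 0 ↔ w a < 1 := by
  rw [IsLocalRing.residue_eq_zero_iff, mem_maximalIdeal_iff]

theorem residue_ne_zero_iff (a : w.valuationSubring) :
    IsLocalRing.residue w.valuationSubring a ≠ 0 ↔ w a = 1 := by
  rw [ne_eq, residue_eq_zero_iff, not_lt]
  exact (show w a ≤ 1 from a.2).ge_iff_eq

theorem map_normForm_eq_one_of_anisotropic {c : K} (hc : c ∈ w.valuationSubring)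
    (hani : NormFormAnisotropic (IsLocalRing.residue w.valuationSubring ⟨c, hc⟩))
    {x y : K} (hx : w x ≤ 1) (hy : w y ≤ 1) (hxy : w x = 1 ∨ w y = 1) :
    w (normForm c x y) = 1 := by
  have hcoe : ((normForm ⟨c, hc⟩ ⟨x, hx⟩ ⟨y, hy⟩ : w.valuationSubring) : K) = normForm c x y :=
    map_normForm w.valuationSubring.subtype _ _ _
  rw [← hcoe, ← residue_ne_zero_iff, map_normForm]
  intro h0
  obtain ⟨hx0, hy0⟩ := hani _ _ h0
  rw [residue_eq_zero_iff] at hx0 hy0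
  exact hxy.elim hx0.ne hy0.ne

theorem map_normForm_of_anisotropic {c : K} (hc : c ∈ w.valuationSubring)
    (hani : NormFormAnisotropic (IsLocalRing.residue w.valuationSubring ⟨c, hc⟩)) (x y : K) :
    w (normForm c x y) = max (w x) (w y) ^ 2 := by
  obtain ⟨m, hm, hmax⟩ : ∃ m, (m = x ∨ m = y) ∧ w m = max (w x) (w y) := by
    rcases max_choice (w x) (w y) with h | h
    exacts [⟨x, .inl rfl, h.symm⟩, ⟨y, .inr rfl, h.symm⟩]
  rcases eq_or_ne m 0 with rfl | hm0
  · have hle : max (w x) (w y) ≤ 0 := by rw [← hmax, map_zero]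
    obtain ⟨rfl, rfl⟩ : x = 0 ∧ y = 0 := by simpa using hle
    simp [normForm]
  have hdiv : ∀ z, w z ≤ w m → w (z / m) ≤ 1 := fun z hz => by
    rw [map_div₀]; exact div_le_one_of_le₀ hz zero_le
  have hunit : w (x / m) = 1 ∨ w (y / m) = 1 := by
    rcases hm with rfl | rfl
    exacts [.inl (by rw [div_self hm0, map_one]), .inr (by rw [div_self hm0, map_one])]
  rw [← hmax, ← mul_div_cancel₀ x hm0, ← mul_div_cancel₀ y hm0, normForm_mul_mul, map_mul,
    map_pow, map_normForm_eq_one_of_anisotropic hc hani (hdiv x (hmax ▸ le_max_left _ _))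
      (hdiv y (hmax ▸ le_max_right _ _)) hunit, mul_one]

end Valuation

theorem valuation_le_max_iff_div_mem_general
    {K : Type*} [Field K] {Γ₀ : Type*} [LinearOrderedCommGroupWithZero Γ₀]
    (w : Valuation K Γ₀) (c : K)
    (hc : c ∈ w.valuationSubring)
    (hani : ∀ x y : IsLocalRing.ResidueField w.valuationSubring,
      x ^ 2 - x * y - IsLocalRing.residue w.valuationSubring ⟨c, hc⟩ * y ^ 2 = 0 →
        x = 0 ∧ y = 0) :
    ∀ (f g : K), g ≠ 0 →
      (min (w f) 1 ≤ w g ↔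
        f ^ 2 / ((1 - f - c * f ^ 2) * g ^ 2) ∈ w.valuationSubring) := by
  intro f g hg
  have hq : w (1 - f - c * f ^ 2) = max (w f) 1 ^ 2 := by
    simpa [normForm, max_comm] using Valuation.map_normForm_of_anisotropic hc hani 1 f
  have hden : 0 < (max (w f) 1 * w g) ^ 2 :=
    pow_pos (zero_lt_iff.2 (mul_ne_zero (zero_lt_one.trans_le (le_max_right _ _)).ne'
      (w.ne_zero_iff.2 hg))) 2
  rw [Valuation.mem_valuationSubring_iff, map_div₀, map_mul, map_pow, map_pow, hq, ← mul_pow,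
    div_le_one₀ hden, pow_le_pow_iff_left₀ zero_le zero_le two_ne_zero, le_max_one_mul_iff]

/-- Let `w` be a valuation on a field `K` (multiplicative notation: `w c = 1` corresponds to
the additive value `w(c) = 0`, and the additive inequality `w(g) ≤ max {w(f), 0}`
corresponds to `min (w f) 1 ≤ w g`).  Let `c ∈ K` satisfy `w(c) = 0`, `w(1 + 4c) = 0`,
and suppose that the quadratic form `(x, y) ↦ x² − xy − c̄y²` over the residue field `Kw`
is anisotropic.  Then for all `f ∈ K` and `g ∈ K×`:
`w(g) ≤ max {w(f), 0}` if and only if `f²/((1 − f − cf²)·g²) ∈ O_w`. -/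
theorem valuation_le_max_iff_div_mem
    {K : Type*} [Field K] {Γ₀ : Type*} [LinearOrderedCommGroupWithZero Γ₀]
    (w : Valuation K Γ₀) (c : K)
    (hc : c ∈ w.valuationSubring) (hcu : w c = 1) (h4c : w (1 + 4 * c) = 1)
    (hani : ∀ x y : IsLocalRing.ResidueField w.valuationSubring,
      x ^ 2 - x * y - IsLocalRing.residue w.valuationSubring ⟨c, hc⟩ * y ^ 2 = 0 →
        x = 0 ∧ y = 0) :
    ∀ (f g : K), g ≠ 0 →
      (min (w f) 1 ≤ w g ↔
        f ^ 2 / ((1 - f - c * f ^ 2) * g ^ 2) ∈ w.valuationSubring) :=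
  valuation_le_max_iff_div_mem_general w c hc hani
end

section
/- Let (K,v) be a valued field whose value group is exactly ℤ, let n ∈ ℕ⁺, and let q be an n-variable quadratic form with all coefficients in O_v such that the residue form q̄ over Kv is anisotropic. Let π ∈ K be such that v(π) is odd. Then the 2n-dimensional quadratic form q ⊥ πq over K, given by (x,y) ↦ q(x) + π·q(y) on Kⁿ × Kⁿ, is anisotropic. -/
/-!
Scale a nonzero vector `x` by a coordinate `u` of maximal valuation: then `x = u • b` with `b`
integral and `b i₀ = 1`, so anisotropy of the residue form makes `q(b)` a unit and
`v(q(x)) = v(u)²` is a nonzero square. Hence if `q(x) + π q(y) = 0` with `y ≠ 0`, also `x ≠ 0`,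
and `v(u)² = v(π) v(w)²` contradicts the oddness of `v(π)`.
-/

open IsLocalRing WithZero

section QuadEval

variable {ι R S : Type*} [Fintype ι] [CommSemiring R] [CommSemiring S]

def quadEval (a : ι → ι → R) (x : ι → R) : R :=
  ∑ i, ∑ j, a i j * x i * x j

@[simp]
lemma quadEval_zero_right (a : ι → ι → R) : quadEval a 0 = 0 := by
  simp [quadEval]

lemma quadEval_smul (a : ι → ι → R) (c : R) (x : ι → R) :
    quadEval a (c • x) = c ^ 2 * quadEval a x := by
  simp only [quadEval, Finset.mul_sum, Pi.smul_apply, smul_eq_mul]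
  congr! 2
  ring

lemma map_quadEval (f : R →+* S) (a : ι → ι → R) (x : ι → R) :
    f (quadEval a x) = quadEval (fun i j => f (a i j)) (f ∘ x) := by
  simp [quadEval, map_sum, map_mul]

end QuadEval

lemma isUnit_quadEval_of_anisotropic_residue {ι R : Type*} [Fintype ι] [CommRing R]
    [IsLocalRing R] {a : ι → ι → R}
    (hani : ∀ y : ι → ResidueField R, quadEval (fun i j => residue R (a i j)) y = 0 → y = 0)
    {b : ι → R} {i₀ : ι} (hb : IsUnit (b i₀)) : IsUnit (quadEval a b) := by
  rw [← residue_ne_zero_iff_isUnit, map_quadEval]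
  intro h
  exact (residue_ne_zero_iff_isUnit _).mpr hb (congrFun (hani _ h) i₀)

namespace Valuation

variable {ι K Γ₀ : Type*} [Fintype ι] [Field K] [LinearOrderedCommGroupWithZero Γ₀]
  (v : Valuation K Γ₀) {a : ι → ι → v.valuationSubring}

lemma exists_valuation_quadEval_eq_sq
    (hani : ∀ y : ι → ResidueField v.valuationSubring,
      quadEval (fun i j => residue v.valuationSubring (a i j)) y = 0 → y = 0)
    {x : ι → K} (hx : x ≠ 0) :
    ∃ u ≠ 0, v (quadEval (fun i j => (a i j : K)) x) = v u ^ 2 := by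
  obtain ⟨i₁, hi₁⟩ := Function.ne_iff.mp hx
  have : Nonempty ι := ⟨i₁⟩
  obtain ⟨i₀, hmax⟩ := Finite.exists_max (v ∘ x)
  set u := x i₀ with hu_def
  have hu : u ≠ 0 := by
    contrapose! hi₁
    simpa [← hu_def, hi₁] using hmax i₁
  let b : ι → v.valuationSubring := fun i =>
    ⟨x i / u, (mem_valuationSubring_iff v _).mpr
      (by rw [map_div₀]; exact div_le_one_of_le₀ (hmax i) zero_le)⟩
  have hx_eq : x = u • ((↑) ∘ b) := by
    ext i
    simp [b, mul_div_cancel₀ _ hu]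
  have hb : IsUnit (b i₀) := by
    convert isUnit_one
    ext
    simp [b, ← hu_def, div_self hu]
  have hvQ : v ((quadEval a b : v.valuationSubring) : K) = 1 :=
    (valuationSubring.integers v).one_of_isUnit (isUnit_quadEval_of_anisotropic_residue hani hb)
  have hcoe : quadEval (fun i j => (a i j : K)) ((↑) ∘ b) =
      ((quadEval a b : v.valuationSubring) : K) :=
    (map_quadEval v.valuationSubring.subtype a b).symm
  refine ⟨u, hu, ?_⟩
  rw [hx_eq, quadEval_smul, hcoe, map_mul, map_pow, hvQ, mul_one]

lemma quadEval_eq_zero_iff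
    (hani : ∀ y : ι → ResidueField v.valuationSubring,
      quadEval (fun i j => residue v.valuationSubring (a i j)) y = 0 → y = 0)
    {x : ι → K} : quadEval (fun i j => (a i j : K)) x = 0 ↔ x = 0 := by
  refine ⟨fun h => ?_, fun h => h ▸ quadEval_zero_right _⟩
  by_contra hx
  obtain ⟨u, hu, hvu⟩ := v.exists_valuation_quadEval_eq_sq hani hx
  rw [h, map_zero, eq_comm, pow_eq_zero_iff two_ne_zero, zero_iff] at hvu
  exact hu hvu

end Valuation

lemma WithZero.not_isSquare_exp_mul_sq {k : ℤ} (hk : Odd k) {b : ℤᵐ⁰} (hb : b ≠ 0) :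
    ¬ IsSquare (exp k * b ^ 2) := by
  rintro ⟨r, hr⟩
  have hr0 : r ≠ 0 := by
    rintro rfl
    simp [hb] at hr
  have hlog := congrArg log hr
  rw [log_mul exp_ne_zero (pow_ne_zero 2 hb), log_mul hr0 hr0, log_exp, log_pow] at hlog
  exact Int.not_even_iff_odd.mpr hk ⟨log r - log b, by simp at hlog; omega⟩

theorem anisotropic_prod_of_anisotropic_residue_general
    {K : Type*} [Field K] (v : Valuation K (WithZero (Multiplicative ℤ)))
    (n : ℕ) (a : Fin n → Fin n → v.valuationSubring)
    (hani : ∀ x : Fin n → IsLocalRing.ResidueField v.valuationSubring,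
      (∑ i, ∑ j, IsLocalRing.residue v.valuationSubring (a i j) * x i * x j) = 0 → x = 0)
    (π : K) (hπ : ∃ k : ℤ, Odd k ∧ v π = (Multiplicative.ofAdd k : Multiplicative ℤ)) :
    ∀ x : (Fin n → K) × (Fin n → K),
      (∑ i, ∑ j, (a i j : K) * x.1 i * x.1 j) +
          π * ∑ i, ∑ j, (a i j : K) * x.2 i * x.2 j = 0 →
        x = 0 := by
  obtain ⟨k, hk, hvπ⟩ := hπ
  have hπ0 : π ≠ 0 := by
    rintro rfl
    simp at hvπ
  intro x h
  change quadEval _ x.1 + π * quadEval _ x.2 = 0 at h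
  by_cases hx₂ : x.2 = 0
  · rw [hx₂, quadEval_zero_right, mul_zero, add_zero, v.quadEval_eq_zero_iff hani] at h
    exact Prod.ext h hx₂
  obtain ⟨w, hw, hvw⟩ := v.exists_valuation_quadEval_eq_sq hani hx₂
  have hx₁ : x.1 ≠ 0 := by
    intro hx₁
    rw [hx₁, quadEval_zero_right, zero_add, mul_eq_zero, v.quadEval_eq_zero_iff hani] at h
    exact h.elim hπ0 hx₂
  obtain ⟨u, -, hvu⟩ := v.exists_valuation_quadEval_eq_sq hani hx₁
  have hval := congrArg v (eq_neg_of_add_eq_zero_left h)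
  rw [Valuation.map_neg, map_mul, hvπ, hvw, hvu] at hval
  exact (not_isSquare_exp_mul_sq hk (v.ne_zero_iff.mpr hw) ⟨v u, hval ▸ sq (v u)⟩).elim

/-- Let `(K, v)` be a valued field whose value group is exactly `ℤ`
(multiplicative notation: `v` is a surjective valuation with values in
`WithZero (Multiplicative ℤ)`; the additive value of `x` is `−k` when
`v x = ofAdd k`).  Let `n ∈ ℕ⁺` and let `q = Σᵢⱼ aᵢⱼXᵢXⱼ` be an `n`-variable quadratic
form with all coefficients in `O_v` whose residue form `q̄` over `Kv` is anisotropic.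
Let `π ∈ K` be such that `v(π)` is odd.  Then the `2n`-dimensional quadratic form
`q ⊥ πq`, given by `(x, y) ↦ q(x) + π·q(y)` on `Kⁿ × Kⁿ`, is anisotropic. -/
theorem anisotropic_prod_of_anisotropic_residue
    {K : Type*} [Field K] (v : Valuation K (WithZero (Multiplicative ℤ)))
    (hv : Function.Surjective v)
    (n : ℕ) (hn : 0 < n) (a : Fin n → Fin n → v.valuationSubring)
    (hani : ∀ x : Fin n → IsLocalRing.ResidueField v.valuationSubring,
      (∑ i, ∑ j, IsLocalRing.residue v.valuationSubring (a i j) * x i * x j) = 0 → x = 0)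
    (π : K) (hπ : ∃ k : ℤ, Odd k ∧ v π = (Multiplicative.ofAdd k : Multiplicative ℤ)) :
    ∀ x : (Fin n → K) × (Fin n → K),
      (∑ i, ∑ j, (a i j : K) * x.1 i * x.1 j) +
          π * ∑ i, ∑ j, (a i j : K) * x.2 i * x.2 j = 0 →
        x = 0 :=
  anisotropic_prod_of_anisotropic_residue_general v n a hani π hπ
end

section
/- Let (K,v) be a henselian valued field, n ∈ ℕ, and let q be an n-variable quadratic form with all coefficients in O_v such that the residue form q̄ over Kv is regular. Then q is anisotropic over K if and only if q̄ is anisotropic over Kv. -/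
/-- Evaluation of the `n`-variable quadratic form `Σᵢⱼ aᵢⱼXᵢXⱼ` with coefficient matrix
`a` at a vector `x`. -/
def coeffEval {K : Type*} [CommRing K] {n : ℕ} (a : Fin n → Fin n → K)
    (x : Fin n → K) : K :=
  ∑ i, ∑ j, a i j * x i * x j

/-- The polar form `𝔟_q(x, y) = q(x + y) − q(x) − q(y)` of a coefficient quadratic form. -/
def coeffPolar {K : Type*} [CommRing K] {n : ℕ} (a : Fin n → Fin n → K)
    (x y : Fin n → K) : K :=
  coeffEval a (x + y) - coeffEval a x - coeffEval a y

/-- A coefficient quadratic form is anisotropic if it vanishes only at `0`. -/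
def coeffAnisotropic {K : Type*} [CommRing K] {n : ℕ} (a : Fin n → Fin n → K) : Prop :=
  ∀ x : Fin n → K, coeffEval a x = 0 → x = 0

/-- A coefficient quadratic form is regular if for every nonzero zero `x` there is `y`
with `𝔟_q(x, y) ≠ 0`. -/
def coeffRegular {K : Type*} [CommRing K] {n : ℕ} (a : Fin n → Fin n → K) : Prop :=
  ∀ x : Fin n → K, x ≠ 0 → coeffEval a x = 0 → ∃ y : Fin n → K, coeffPolar a x y ≠ 0

lemma coeffPolar_eq {K : Type*} [CommRing K] {n : ℕ} (a : Fin n → Fin n → K)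
    (x y : Fin n → K) :
    coeffPolar a x y = ∑ i, ∑ j, a i j * (x i * y j + y i * x j) := by
  simp only [coeffPolar, coeffEval, Pi.add_apply, ← Finset.sum_sub_distrib]
  exact Finset.sum_congr rfl fun i _ => Finset.sum_congr rfl fun j _ => by ring

lemma coeffEval_add_mul {K : Type*} [CommRing K] {n : ℕ} (a : Fin n → Fin n → K)
    (x y : Fin n → K) (t : K) :
    coeffEval a (fun i => x i + t * y i)
      = coeffEval a x + t * coeffPolar a x y + t ^ 2 * coeffEval a y := by
  rw [coeffPolar_eq]
  simp only [coeffEval, Finset.mul_sum, ← Finset.sum_add_distrib]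
  exact Finset.sum_congr rfl fun i _ => Finset.sum_congr rfl fun j _ => by ring

lemma coeffEval_smul {K : Type*} [CommRing K] {n : ℕ} (a : Fin n → Fin n → K)
    (x : Fin n → K) (c : K) :
    coeffEval a (fun i => c * x i) = c ^ 2 * coeffEval a x := by
  simp only [coeffEval, Finset.mul_sum]
  exact Finset.sum_congr rfl fun i _ => Finset.sum_congr rfl fun j _ => by ring

lemma coeffEval_map {A B : Type*} [CommRing A] [CommRing B] (f : A →+* B)
    {n : ℕ} (a : Fin n → Fin n → A) (x : Fin n → A) :
    f (coeffEval a x) = coeffEval (fun i j => f (a i j)) (fun i => f (x i)) := by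
  simp [coeffEval, map_sum, map_mul]

lemma coeffPolar_map {A B : Type*} [CommRing A] [CommRing B] (f : A →+* B)
    {n : ℕ} (a : Fin n → Fin n → A) (x y : Fin n → A) :
    f (coeffPolar a x y)
      = coeffPolar (fun i j => f (a i j)) (fun i => f (x i)) (fun i => f (y i)) := by
  rw [coeffPolar_eq, coeffPolar_eq]
  simp [map_sum, map_mul, map_add]

/-- Let `(K, v)` be a henselian valued field, `n ∈ ℕ`, and let `q` be an `n`-variable
quadratic form with all coefficients in `O_v` such that the residue form `q̄` over the
residue field `Kv` is regular.  Then `q` is anisotropic over `K` if and only if `q̄` is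
anisotropic over `Kv`. -/
theorem anisotropic_iff_residue_anisotropic {K : Type*} [Field K]
    {Γ₀ : Type*} [LinearOrderedCommGroupWithZero Γ₀] (v : Valuation K Γ₀)
    [HenselianLocalRing v.valuationSubring]
    (n : ℕ) (a : Fin n → Fin n → v.valuationSubring)
    (hreg : coeffRegular fun i j => IsLocalRing.residue v.valuationSubring (a i j)) :
    coeffAnisotropic (fun i j => (a i j : K)) ↔
      coeffAnisotropic fun i j => IsLocalRing.residue v.valuationSubring (a i j) := by
  constructor
  · -- henselian direction
    intro haniso xb hxb
    by_contra hxbne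
    obtain ⟨x, hx⟩ : ∃ x : Fin n → v.valuationSubring,
        (fun i => IsLocalRing.residue v.valuationSubring (x i)) = xb := by
      choose x hxx using fun i => IsLocalRing.residue_surjective (xb i)
      exact ⟨x, funext hxx⟩
    obtain ⟨yb, hyb⟩ := hreg xb hxbne hxb
    obtain ⟨y, hy⟩ : ∃ y : Fin n → v.valuationSubring,
        (fun i => IsLocalRing.residue v.valuationSubring (y i)) = yb := by
      choose y hyy using fun i => IsLocalRing.residue_surjective (yb i)
      exact ⟨y, funext hyy⟩
    have hc₀ : IsLocalRing.residue v.valuationSubring (coeffEval a x) = 0 := by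
      rw [coeffEval_map, hx]; exact hxb
    have hc₀mem : coeffEval a x ∈ IsLocalRing.maximalIdeal v.valuationSubring :=
      (IsLocalRing.residue_eq_zero_iff _).mp hc₀
    have hc₁unit : IsUnit (coeffPolar a x y) := by
      apply (IsLocalRing.residue_ne_zero_iff_isUnit _).mp
      rw [coeffPolar_map, hx, hy]; exact hyb
    set c₀ := coeffEval a x
    set c₁ := coeffPolar a x y
    set c₂ := coeffEval a y
    -- Hensel's lemma on s² + c₁ s + c₂ c₀
    have hmonic : (Polynomial.X ^ 2 +
        (Polynomial.C c₁ * Polynomial.X + Polynomial.C (c₂ * c₀))).Monic := by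
      apply Polynomial.monic_X_pow_add
      exact lt_of_le_of_lt (Polynomial.degree_linear_le) (by decide)
    have h0 : (Polynomial.X ^ 2 +
        (Polynomial.C c₁ * Polynomial.X + Polynomial.C (c₂ * c₀))).eval 0
        ∈ IsLocalRing.maximalIdeal v.valuationSubring := by
      simpa using Ideal.mul_mem_left _ c₂ hc₀mem
    have hderiv : IsUnit ((Polynomial.derivative (Polynomial.X ^ 2 +
        (Polynomial.C c₁ * Polynomial.X + Polynomial.C (c₂ * c₀)))).eval 0) := by
      simpa using hc₁unit
    obtain ⟨s, hsroot, hsmem'⟩ :=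
      HenselianLocalRing.is_henselian _ hmonic 0 h0 hderiv
    have hsmem : s ∈ IsLocalRing.maximalIdeal v.valuationSubring := by simpa using hsmem'
    have hroot : s ^ 2 + (c₁ * s + c₂ * c₀) = 0 := by
      simpa [Polynomial.IsRoot] using hsroot
    have hsc₁ : IsUnit (s + c₁) := by
      by_contra h
      have hmem2 : s + c₁ ∈ IsLocalRing.maximalIdeal v.valuationSubring :=
        (IsLocalRing.mem_maximalIdeal _).mpr h
      have : c₁ ∈ IsLocalRing.maximalIdeal v.valuationSubring := by
        simpa using Ideal.sub_mem _ hmem2 hsmem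
      exact (IsLocalRing.residue_ne_zero_iff_isUnit _).mpr hc₁unit
        ((IsLocalRing.residue_eq_zero_iff _).mpr this) |>.elim
    obtain ⟨U, hU⟩ := hsc₁
    have hw : (s + c₁) * ((U⁻¹ : v.valuationSubringˣ) : v.valuationSubring) = 1 := by
      rw [← hU]; exact U.mul_inv
    set wu : v.valuationSubring := ((U⁻¹ : v.valuationSubringˣ) : v.valuationSubring)
    have htmem : -c₀ * wu ∈ IsLocalRing.maximalIdeal v.valuationSubring :=
      Ideal.mul_mem_right _ _ (neg_mem hc₀mem)
    have key : c₀ + (-c₀ * wu) * c₁ + (-c₀ * wu) ^ 2 * c₂ = 0 := by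
      linear_combination (c₀ * wu ^ 2) * hroot - (c₀ * wu * s + c₀) * hw
    have hz : coeffEval a (fun i => x i + (-c₀ * wu) * y i) = 0 := by
      rw [coeffEval_add_mul]; linear_combination key
    have hcast2 : ((coeffEval a (fun i => x i + (-c₀ * wu) * y i) : v.valuationSubring) : K)
        = coeffEval (fun i j => (a i j : K))
          (fun i => ((x i + (-c₀ * wu) * y i : v.valuationSubring) : K)) :=
      coeffEval_map v.valuationSubring.subtype a _
    have hzK : coeffEval (fun i j => (a i j : K))
        (fun i => ((x i + (-c₀ * wu) * y i : v.valuationSubring) : K)) = 0 := by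
      rw [← hcast2, hz]; simp
    have hzero := haniso _ hzK
    apply hxbne
    funext i
    have hzi : x i + (-c₀ * wu) * y i = 0 := by
      have := congrFun hzero i
      exact Subtype.coe_injective (by simpa using this)
    have : xb i = IsLocalRing.residue v.valuationSubring (x i) := (congrFun hx i).symm
    rw [this]
    have hxe : x i = -((-c₀ * wu) * y i) := by linear_combination hzi
    rw [hxe, map_neg, map_mul, (IsLocalRing.residue_eq_zero_iff _).mpr htmem]
    simp
  · intro hres xK hxK
    by_contra hxne
    obtain ⟨j, hj⟩ := Function.ne_iff.mp hxne
    obtain ⟨i, -, hi⟩ := Finset.exists_max_image Finset.univ (fun k => v (xK k))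
      ⟨j, Finset.mem_univ j⟩
    have hxi : xK i ≠ 0 := by
      intro h
      have h2 := hi j (Finset.mem_univ j)
      rw [h, map_zero] at h2
      exact hj (v.zero_iff.mp (le_antisymm h2 zero_le'))
    have hmem : ∀ k, v ((xK i)⁻¹ * xK k) ≤ 1 := by
      intro k
      rw [map_mul, map_inv₀]
      calc (v (xK i))⁻¹ * v (xK k) ≤ (v (xK i))⁻¹ * v (xK i) :=
            mul_le_mul_right (hi k (Finset.mem_univ k)) _
        _ = 1 := inv_mul_cancel₀ (v.ne_zero_iff.mpr hxi)
    set w : Fin n → v.valuationSubring := fun k => ⟨(xK i)⁻¹ * xK k, hmem k⟩ with hwdef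
    have hcast : ((coeffEval a w : v.valuationSubring) : K)
        = coeffEval (fun i j => (a i j : K)) (fun k => ((w k : v.valuationSubring) : K)) :=
      coeffEval_map v.valuationSubring.subtype a w
    have hwK : coeffEval (fun i j => (a i j : K))
        (fun k => ((w k : v.valuationSubring) : K)) = 0 := by
      show coeffEval _ (fun k => (xK i)⁻¹ * xK k) = 0
      rw [coeffEval_smul, hxK, mul_zero]
    have hw0 : coeffEval a w = 0 := Subtype.coe_injective (by
      show ((coeffEval a w : v.valuationSubring) : K) = ((0 : v.valuationSubring) : K)
      rw [hcast, hwK]; simp)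
    have hres0 : coeffEval (fun i j => IsLocalRing.residue v.valuationSubring (a i j))
        (fun k => IsLocalRing.residue v.valuationSubring (w k)) = 0 := by
      rw [← coeffEval_map (IsLocalRing.residue v.valuationSubring) a w, hw0, map_zero]
    have hzero := hres _ hres0
    have h1 : IsLocalRing.residue v.valuationSubring (w i) = 0 := by
      have := congrFun hzero i; simpa using this
    have hwi : w i = 1 := Subtype.ext (by
      show (xK i)⁻¹ * xK i = 1
      exact inv_mul_cancel₀ hxi)
    rw [hwi, map_one] at h1
    exact one_ne_zero h1
end

section
/- (Schwarz Inequality) Let (K,v) be a henselian valued field and let (V,q) be an anisotropic quadratic form over K. Then S(q) ∩ m_v = ∅; equivalently, for all x, y ∈ V one has 2·v(𝔟_q(x,y)) ≥ v(q(x)) + v(q(y)) (with the convention v(0) = ∞). -/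
/-- The set `S(q)`: all `c ∈ K` with `1 + 4c ≠ 0` of the form `−q(x)q(y)/𝔟_q(x,y)²`
with `𝔟_q(x,y) ≠ 0`. -/
def Sset {K V : Type*} [Field K] [AddCommGroup V] [Module K V]
    (q : QuadraticForm K V) : Set K :=
  {c | 1 + 4 * c ≠ 0 ∧
    ∃ x y : V, QuadraticMap.polar q x y ≠ 0 ∧
      c = -(q x * q y / QuadraticMap.polar q x y ^ 2)}

/-- **Schwarz Inequality.**
Let `(K, v)` be a henselian valued field and let `(V, q)` be an anisotropic quadratic
form over `K`.  Then `S(q) ∩ m_v = ∅` (in multiplicative notation, `m_v = {x | v x < 1}`);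
equivalently, for all `x, y ∈ V` one has `2·v(𝔟_q(x,y)) ≥ v(q(x)) + v(q(y))`, which in
multiplicative notation reads `v(𝔟_q(x,y))² ≤ v(q(x))·v(q(y))`. -/
theorem schwarz_inequality {K : Type*} [Field K]
    {Γ₀ : Type*} [LinearOrderedCommGroupWithZero Γ₀] (v : Valuation K Γ₀)
    [HenselianLocalRing v.valuationSubring]
    {V : Type*} [AddCommGroup V] [Module K V] [FiniteDimensional K V]
    (q : QuadraticForm K V) (hq : q.Anisotropic) :
    (∀ c ∈ Sset q, ¬ v c < 1) ∧
    ∀ x y : V, v (QuadraticMap.polar q x y) ^ 2 ≤ v (q x) * v (q y) := by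
  classical
  have key : ∀ c ∈ Sset q, ¬ v c < 1 := by
    rintro c ⟨h4, x, y, hb, rfl⟩ hvc
    set b := QuadraticMap.polar q x y with hbdef
    have hx0 : x ≠ 0 := by
      rintro rfl
      exact hb (QuadraticMap.polar_zero_left q y)
    have hqx : q x ≠ 0 := fun h => hx0 (hq x h)
    set c' : K := q x * q y / b ^ 2 with hc'
    have hvc' : v c' < 1 := by rwa [Valuation.map_neg] at hvc
    have hc'mem : c' ∈ v.valuationSubring := le_of_lt hvc'
    -- the henselian polynomial
    set R := v.valuationSubring
    set f : Polynomial R :=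
      Polynomial.X ^ 2 + Polynomial.X + Polynomial.C (⟨c', hc'mem⟩ : R) with hf
    have hmonic : f.Monic := by
      have hd : (Polynomial.X ^ 2 + Polynomial.X : Polynomial R).degree = 2 := by
        compute_degree!
      have h1 : (Polynomial.X ^ 2 + Polynomial.X : Polynomial R).Monic := by
        refine (Polynomial.monic_X_pow 2).add_of_left ?_
        rw [Polynomial.degree_X, Polynomial.degree_X_pow]
        norm_num
      refine h1.add_of_left ?_
      refine lt_of_le_of_lt (Polynomial.degree_C_le) ?_
      rw [hd]; norm_num
    have hmem : f.eval 0 ∈ IsLocalRing.maximalIdeal R := by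
      have : f.eval 0 = (⟨c', hc'mem⟩ : R) := by simp [hf]
      rw [this, ValuationSubring.valuation_lt_one_iff]
      exact ((Valuation.isEquiv_valuation_valuationSubring v).lt_one_iff_lt_one).mp hvc'
    have hunit : IsUnit (f.derivative.eval 0) := by
      have : f.derivative.eval 0 = 1 := by simp [hf]
      rw [this]; exact isUnit_one
    obtain ⟨a, ha, -⟩ := HenselianLocalRing.is_henselian f hmonic 0 hmem hunit
    have ha' : ((a : K)) ^ 2 + (a : K) + c' = 0 := by
      have h0 : (a : R) ^ 2 + a + (⟨c', hc'mem⟩ : R) = 0 := by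
        simpa [hf, Polynomial.IsRoot] using ha
      have h1 := congrArg Subtype.val h0
      push_cast at h1
      exact h1
    set t : K := (b / q x) * (a : K) with ht
    have expand : q (t • x + y) = (b ^ 2 / q x) * (((a : K)) ^ 2 + (a : K) + c') := by
      have h1 : q (t • x + y) = QuadraticMap.polar q (t • x) y + q (t • x) + q y := by
        rw [QuadraticMap.polar]; ring
      rw [h1, QuadraticMap.polar_smul_left, QuadraticMap.map_smul, smul_eq_mul, smul_eq_mul,
        ht, hc', ← hbdef]
      field_simp
      ring
    have hz : t • x + y = 0 := by
      apply hq
      rw [expand, ha', mul_zero]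
    have hy : y = -(t • x) := by
      rw [eq_neg_iff_add_eq_zero, add_comm]
      exact hz
    have hqy : q y = t * t * q x := by
      rw [hy, ← neg_smul, QuadraticMap.map_smul, smul_eq_mul]
      ring
    have hb2 : b = -(t * (2 * q x)) := by
      rw [hbdef, hy, ← neg_smul, QuadraticMap.polar_smul_right, QuadraticMap.polar_self,
        smul_eq_mul, two_nsmul]
      ring
    have ht0 : t ≠ 0 := by
      intro h0
      apply hb
      rw [hb2, h0]; ring
    have h2 : (2 : K) ≠ 0 := by
      intro h0
      apply hb
      rw [hb2, h0]; ring
    apply h4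
    rw [hc', hqy, hb2]
    field_simp
    ring
  refine ⟨key, ?_⟩
  intro x y
  by_contra h
  push_neg at h
  have hb : QuadraticMap.polar q x y ≠ 0 := by
    intro hb0
    rw [hb0] at h
    simp at h
  set b := QuadraticMap.polar q x y with hbdef
  set c : K := -(q x * q y / b ^ 2) with hc
  have hvb : v b ≠ 0 := by
    simpa using hb
  have hvc : v c < 1 := by
    rw [hc, Valuation.map_neg, map_div₀, map_mul, map_pow]
    rw [div_lt_iff₀ (zero_lt_iff.mpr (pow_ne_zero 2 hvb)), one_mul]
    exact h
  have h4 : 1 + 4 * c ≠ 0 := by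
    intro h0
    have h4K : (4 : K) ≠ 0 := by
      intro h40
      rw [h40, mul_comm, mul_zero, add_zero] at h0
      exact one_ne_zero h0
    have hcval : c = -(4⁻¹ : K) := by
      field_simp
      linear_combination h0
    have hv4 : v (4 : K) ≠ 0 := by simpa using h4K
    have h41 : v (4 : K) ≤ 1 := by
      have h21 : v (2 : K) ≤ 1 := by
        have : ((2 : K)) = 1 + 1 := by norm_num
        rw [this]
        exact v.map_add_le (by simp) (by simp)
      have : ((4 : K)) = 2 * 2 := by norm_num
      rw [this, map_mul]
      calc v (2:K) * v (2:K) ≤ 1 * 1 := mul_le_mul' h21 h21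
        _ = 1 := mul_one 1
    rw [hcval, Valuation.map_neg, map_inv₀] at hvc
    have : (1 : Γ₀) < 1 := by
      calc (1 : Γ₀) = (v (4:K))⁻¹ * v (4:K) := (inv_mul_cancel₀ hv4).symm
        _ ≤ (v (4:K))⁻¹ * 1 := mul_le_mul' le_rfl h41
        _ = (v (4:K))⁻¹ := mul_one _
        _ < 1 := hvc
    exact lt_irrefl _ this
  exact key c ⟨h4, x, y, hb, hc⟩ hvc
end
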